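/- arXiv:2412.02238 — 2 statements merged into one kernel-verified Lean document; each statement's English description precedes it below -/
import Mathlib

section
/- Let $\lambda > 0$, $\sigma \ge \lambda/2$, and $Q_u^\lambda(\eta) = \lfloor \eta/\lambda + 1/2\rfloor \lambda$. Then for all $\eta \ge \sigma$, $(1 - \frac{\lambda}{2\sigma})\eta^2 \le \eta\, Q_u^\lambda(\eta) \le (1 + \frac{\lambda}{2\sigma})\eta^2$. -/
theorem stmt_7 (lam σ : ℝ) (hl : 0 < lam) (hσ : lam / 2 ≤ σ) :
    ∀ η : ℝ, σ ≤ η →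
      (1 - lam / (2 * σ)) * η ^ 2 ≤ η * ((⌊η / lam + 1 / 2⌋ : ℝ) * lam) ∧
        η * ((⌊η / lam + 1 / 2⌋ : ℝ) * lam) ≤ (1 + lam / (2 * σ)) * η ^ 2 := by
  intro η hη
  have hσ0 : 0 < σ := lt_of_lt_of_le (by linarith) hσ
  have hη0 : 0 < η := lt_of_lt_of_le hσ0 hη
  have hfl : (⌊η / lam + 1 / 2⌋ : ℝ) ≤ η / lam + 1 / 2 := Int.floor_le _
  have hfg : η / lam + 1 / 2 - 1 < (⌊η / lam + 1 / 2⌋ : ℝ) := Int.sub_one_lt_floor _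
  -- Q bounds: η - lam/2 < Q ≤ η + lam/2
  have hQle : (⌊η / lam + 1 / 2⌋ : ℝ) * lam ≤ η + lam / 2 := by
    have := mul_le_mul_of_nonneg_right hfl hl.le
    calc (⌊η / lam + 1 / 2⌋ : ℝ) * lam ≤ (η / lam + 1 / 2) * lam := this
      _ = η + lam / 2 := by field_simp
  have hQge : η - lam / 2 ≤ (⌊η / lam + 1 / 2⌋ : ℝ) * lam := by
    have := mul_le_mul_of_nonneg_right hfg.le hl.le
    calc η - lam / 2 = (η / lam + 1 / 2 - 1) * lam := by field_simp; ring
      _ ≤ _ := this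
  -- lam/2 * η ≤ lam/(2σ) * η^2
  have key : lam / 2 * η ≤ lam / (2 * σ) * η ^ 2 := by
    rw [div_mul_eq_mul_div, div_mul_eq_mul_div,
      div_le_div_iff₀ (by norm_num) (by linarith : (0:ℝ) < 2 * σ)]
    nlinarith [mul_le_mul_of_nonneg_right hη hη0.le, mul_pos hl hη0]
  constructor
  · nlinarith [mul_le_mul_of_nonneg_left hQge hη0.le]
  · nlinarith [mul_le_mul_of_nonneg_left hQle hη0.le]
end

section
/- Let $\lambda > 1$ and define the symmetric logarithmic quantizer $Q_{sl}^\lambda(\eta) = \operatorname{sign}(\eta)\, \lambda^{\lfloor \log_\lambda(2\lambda|\eta|/(\lambda+1)) \rfloor}$ for $\eta \ne 0$ and $Q_{sl}^\lambda(0)=0$. Then for all $\eta \ge 0$, $\frac{2}{\lambda+1}\eta^2 \le \eta\, Q_{sl}^\lambda(\eta) \le \frac{2\lambda}{\lambda+1}\eta^2$. -/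
noncomputable def Qsl (lam : ℝ) (η : ℝ) : ℝ :=
  if η = 0 then 0
  else Real.sign η * lam ^ (⌊Real.logb lam (2 * lam * |η| / (lam + 1))⌋ : ℤ)

theorem stmt_8 (lam : ℝ) (hl : 1 < lam) :
    ∀ η : ℝ, 0 ≤ η →
      2 / (lam + 1) * η ^ 2 ≤ η * Qsl lam η ∧
        η * Qsl lam η ≤ 2 * lam / (lam + 1) * η ^ 2 := by
  intro η hη
  rcases eq_or_lt_of_le hη with h0 | hpos
  · simp [Qsl, ← h0]
  have hlp : (0:ℝ) < lam := lt_trans one_pos hl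
  have hlp1 : (0:ℝ) < lam + 1 := by linarith
  have habs : |η| = η := abs_of_pos hpos
  set x : ℝ := 2 * lam * |η| / (lam + 1) with hx
  have hxpos : 0 < x := by
    rw [hx, habs]; positivity
  set k : ℤ := ⌊Real.logb lam x⌋ with hk
  have hQ : Qsl lam η = lam ^ k := by
    rw [Qsl, if_neg (ne_of_gt hpos), Real.sign_of_pos hpos, one_mul]
  -- lam^k ≤ x
  have h1 : lam ^ k ≤ x := by
    have : (lam : ℝ) ^ ((k : ℝ)) ≤ lam ^ (Real.logb lam x) :=
      Real.rpow_le_rpow_of_exponent_le hl.le (Int.floor_le _)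
    rw [Real.rpow_logb hlp (ne_of_gt hl) hxpos] at this
    rwa [Real.rpow_intCast] at this
  -- x < lam * lam^k
  have h2 : x < lam * lam ^ k := by
    have hlt : Real.logb lam x < (k : ℝ) + 1 := Int.lt_floor_add_one _
    have : lam ^ (Real.logb lam x) < lam ^ ((k : ℝ) + 1) :=
      Real.rpow_lt_rpow_of_exponent_lt hl hlt
    rw [Real.rpow_logb hlp (ne_of_gt hl) hxpos] at this
    calc x < lam ^ ((k : ℝ) + 1) := this
      _ = lam ^ ((((k + 1) : ℤ)) : ℝ) := by push_cast; ring_nf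
      _ = lam ^ (k + 1 : ℤ) := Real.rpow_intCast _ _
      _ = lam * lam ^ k := by rw [zpow_add_one₀ (ne_of_gt hlp)]; ring
  have hxval : x = 2 * lam * η / (lam + 1) := by rw [hx, habs]
  constructor
  · -- 2/(lam+1) η² = η * (x/lam) ≤ η * lam^k
    rw [hQ]
    have hxl : x / lam ≤ lam ^ k := by
      rw [div_le_iff₀ hlp]; nlinarith [h2]
    have := mul_le_mul_of_nonneg_left hxl hpos.le
    calc 2 / (lam + 1) * η ^ 2 = η * (x / lam) := by
          rw [hxval]; field_simp
      _ ≤ η * lam ^ k := this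
  · rw [hQ]
    have := mul_le_mul_of_nonneg_left h1 hpos.le
    calc η * lam ^ k ≤ η * x := this
      _ = 2 * lam / (lam + 1) * η ^ 2 := by rw [hxval]; field_simp
end
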